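/- arXiv:1910.12950 — 5 statements merged into one kernel-verified Lean document; each statement's English description precedes it below -/
import Mathlib

section
/- In the graded tensor product A_q ⊗ A_q, the elements X = x⊗x, Ξ = x⊗ξ + ξ⊗x, Θ = x⊗θ + θ⊗x and Z = x⊗z + z⊗x satisfy X·Ξ = q Ξ·X, X·Θ = q Θ·X, and X·Z = Z·X. -/
/-!
STATEMENT 2: In the graded tensor product `A_q ⊗ A_q`, the elements `X = x⊗x`,
`Ξ = x⊗ξ + ξ⊗x`, `Θ = x⊗θ + θ⊗x` and `Z = x⊗z + z⊗x` satisfy `X·Ξ = q Ξ·X`,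
`X·Θ = q Θ·X`, and `X·Z = Z·X`.
Here `A_q ⊗ A_q` carries the graded multiplication
`(a⊗b)(c⊗d) = (−1)^{⟨deg b, deg c⟩} ac ⊗ bd` on homogeneous elements.
-/
open scoped TensorProduct

namespace DGQS

/-- The standard scalar product `⟨(a,b),(a',b')⟩ = aa' + bb'` on `ℤ₂ × ℤ₂`. -/
def pair2 (γ δ : ZMod 2 × ZMod 2) : ZMod 2 := γ.1 * δ.1 + γ.2 * δ.2

/-- The sign `(−1)^{⟨γ,δ⟩}`. -/
noncomputable def gsign (γ δ : ZMod 2 × ZMod 2) : ℂ := (-1 : ℂ) ^ (pair2 γ δ).val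

/-- The defining relations of the double-graded quantum superplane, imposed on the free
algebra on four generators `x = ι 0`, `ξ = ι 1`, `θ = ι 2`, `z = ι 3`:
`xξ = q ξx`, `xθ = q θx`, `xz = zx`, `ξ² = 0`, `θ² = 0`, `ξθ = θξ`,
`ξz = −q⁻¹ zξ`, `θz = −q⁻¹ zθ`. -/
inductive Rel (q : ℂ) : FreeAlgebra ℂ (Fin 4) → FreeAlgebra ℂ (Fin 4) → Prop
  | x_xi : Rel q (FreeAlgebra.ι ℂ (0 : Fin 4) * FreeAlgebra.ι ℂ (1 : Fin 4))
      (q • (FreeAlgebra.ι ℂ (1 : Fin 4) * FreeAlgebra.ι ℂ (0 : Fin 4)))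
  | x_th : Rel q (FreeAlgebra.ι ℂ (0 : Fin 4) * FreeAlgebra.ι ℂ (2 : Fin 4))
      (q • (FreeAlgebra.ι ℂ (2 : Fin 4) * FreeAlgebra.ι ℂ (0 : Fin 4)))
  | x_z : Rel q (FreeAlgebra.ι ℂ (0 : Fin 4) * FreeAlgebra.ι ℂ (3 : Fin 4))
      (FreeAlgebra.ι ℂ (3 : Fin 4) * FreeAlgebra.ι ℂ (0 : Fin 4))
  | xi_sq : Rel q (FreeAlgebra.ι ℂ (1 : Fin 4) * FreeAlgebra.ι ℂ (1 : Fin 4)) 0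
  | th_sq : Rel q (FreeAlgebra.ι ℂ (2 : Fin 4) * FreeAlgebra.ι ℂ (2 : Fin 4)) 0
  | xi_th : Rel q (FreeAlgebra.ι ℂ (1 : Fin 4) * FreeAlgebra.ι ℂ (2 : Fin 4))
      (FreeAlgebra.ι ℂ (2 : Fin 4) * FreeAlgebra.ι ℂ (1 : Fin 4))
  | xi_z : Rel q (FreeAlgebra.ι ℂ (1 : Fin 4) * FreeAlgebra.ι ℂ (3 : Fin 4))
      ((-q⁻¹) • (FreeAlgebra.ι ℂ (3 : Fin 4) * FreeAlgebra.ι ℂ (1 : Fin 4)))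
  | th_z : Rel q (FreeAlgebra.ι ℂ (2 : Fin 4) * FreeAlgebra.ι ℂ (3 : Fin 4))
      ((-q⁻¹) • (FreeAlgebra.ι ℂ (3 : Fin 4) * FreeAlgebra.ι ℂ (2 : Fin 4)))

/-- The algebra of polynomials on the double-graded quantum superplane `ℝ_q(1|𝟏)`. -/
abbrev Aq (q : ℂ) : Type := RingQuot (Rel q)

/-- The generators of `A_q`. -/
noncomputable def gen (q : ℂ) (i : Fin 4) : Aq q :=
  RingQuot.mkAlgHom ℂ (Rel q) (FreeAlgebra.ι ℂ i)

/-- The generator `x`, of degree `(0,0)`. -/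
noncomputable def X (q : ℂ) : Aq q := gen q 0
/-- The generator `ξ`, of degree `(0,1)`. -/
noncomputable def Xi (q : ℂ) : Aq q := gen q 1
/-- The generator `θ`, of degree `(1,0)`. -/
noncomputable def Th (q : ℂ) : Aq q := gen q 2
/-- The generator `z`, of degree `(1,1)`. -/
noncomputable def Zg (q : ℂ) : Aq q := gen q 3

/-- The `ℤ₂ × ℤ₂`-degrees of the generators. -/
def dg : Fin 4 → ZMod 2 × ZMod 2 := ![(0, 0), (0, 1), (1, 0), (1, 1)]

/-- The homogeneous component of degree `γ` of `A_q`: the span of the images of the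
words in the generators of total degree `γ`. -/
noncomputable def grading (q : ℂ) (γ : ZMod 2 × ZMod 2) : Submodule ℂ (Aq q) :=
  Submodule.span ℂ
    { a | ∃ w : List (Fin 4), (w.map dg).sum = γ ∧ a = (w.map (gen q)).prod }

end DGQS

namespace DGQS

variable {q : ℂ}

lemma gen_mem_grading (i : Fin 4) : gen q i ∈ grading q (dg i) :=
  Submodule.subset_span ⟨[i], by simp, by simp⟩

lemma X_mem_grading : X q ∈ grading q (0, 0) := gen_mem_grading 0
lemma Xi_mem_grading : Xi q ∈ grading q (0, 1) := gen_mem_grading 1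
lemma Th_mem_grading : Th q ∈ grading q (1, 0) := gen_mem_grading 2
lemma Zg_mem_grading : Zg q ∈ grading q (1, 1) := gen_mem_grading 3

lemma X_mul_Xi : X q * Xi q = q • (Xi q * X q) := by
  simpa only [X, Xi, gen, map_mul, map_smul] using RingQuot.mkAlgHom_rel ℂ (Rel.x_xi (q := q))

lemma X_mul_Th : X q * Th q = q • (Th q * X q) := by
  simpa only [X, Th, gen, map_mul, map_smul] using RingQuot.mkAlgHom_rel ℂ (Rel.x_th (q := q))

lemma X_mul_Zg : X q * Zg q = Zg q * X q := by
  simpa only [X, Zg, gen, map_mul] using RingQuot.mkAlgHom_rel ℂ (Rel.x_z (q := q))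

lemma gsign_zero_left (δ : ZMod 2 × ZMod 2) : gsign (0, 0) δ = 1 := by
  simp [gsign, pair2]

lemma gsign_zero_right (γ : ZMod 2 × ZMod 2) : gsign γ (0, 0) = 1 := by
  simp [gsign, pair2]

/-- Every sign in these graded products pairs a degree with the degree `(0,0)` of `u`, so all
signs are `+1` and the relation `u g = r g u` passes to both tensor factors. -/
theorem gmul_tmul_self_comm_primitive
    (gmul : (Aq q ⊗[ℂ] Aq q) →ₗ[ℂ] (Aq q ⊗[ℂ] Aq q) →ₗ[ℂ] (Aq q ⊗[ℂ] Aq q))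
    (hgmul : ∀ {γ δ : ZMod 2 × ZMod 2} {b c : Aq q},
      b ∈ grading q γ → c ∈ grading q δ → ∀ a d : Aq q,
        gmul (a ⊗ₜ[ℂ] b) (c ⊗ₜ[ℂ] d) = gsign γ δ • ((a * c) ⊗ₜ[ℂ] (b * d)))
    {u g : Aq q} {γ : ZMod 2 × ZMod 2} (hu : u ∈ grading q (0, 0)) (hg : g ∈ grading q γ)
    {r : ℂ} (hug : u * g = r • (g * u)) :
    gmul (u ⊗ₜ[ℂ] u) (u ⊗ₜ[ℂ] g + g ⊗ₜ[ℂ] u)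
      = r • gmul (u ⊗ₜ[ℂ] g + g ⊗ₜ[ℂ] u) (u ⊗ₜ[ℂ] u) := by
  rw [map_add, map_add, LinearMap.add_apply, hgmul hu hu, hgmul hu hg, hgmul hu hu,
    hgmul hg hu, gsign_zero_left, gsign_zero_left, gsign_zero_right]
  simp only [one_smul]
  rw [hug, smul_add, TensorProduct.tmul_smul, ← TensorProduct.smul_tmul']

end DGQS

open DGQS in
theorem statement2_general (q : ℂ)
    (gmul : (Aq q ⊗[ℂ] Aq q) →ₗ[ℂ] (Aq q ⊗[ℂ] Aq q) →ₗ[ℂ] (Aq q ⊗[ℂ] Aq q))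
    (hgmul : ∀ {γ δ : ZMod 2 × ZMod 2} {b c : Aq q},
      b ∈ grading q γ → c ∈ grading q δ → ∀ a d : Aq q,
        gmul (a ⊗ₜ[ℂ] b) (c ⊗ₜ[ℂ] d) = gsign γ δ • ((a * c) ⊗ₜ[ℂ] (b * d))) :
    gmul (X q ⊗ₜ[ℂ] X q) (X q ⊗ₜ[ℂ] Xi q + Xi q ⊗ₜ[ℂ] X q)
        = q • gmul (X q ⊗ₜ[ℂ] Xi q + Xi q ⊗ₜ[ℂ] X q) (X q ⊗ₜ[ℂ] X q) ∧
    gmul (X q ⊗ₜ[ℂ] X q) (X q ⊗ₜ[ℂ] Th q + Th q ⊗ₜ[ℂ] X q)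
        = q • gmul (X q ⊗ₜ[ℂ] Th q + Th q ⊗ₜ[ℂ] X q) (X q ⊗ₜ[ℂ] X q) ∧
    gmul (X q ⊗ₜ[ℂ] X q) (X q ⊗ₜ[ℂ] Zg q + Zg q ⊗ₜ[ℂ] X q)
        = gmul (X q ⊗ₜ[ℂ] Zg q + Zg q ⊗ₜ[ℂ] X q) (X q ⊗ₜ[ℂ] X q) := by
  refine ⟨gmul_tmul_self_comm_primitive gmul hgmul X_mem_grading Xi_mem_grading X_mul_Xi,
    gmul_tmul_self_comm_primitive gmul hgmul X_mem_grading Th_mem_grading X_mul_Th, ?_⟩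
  have hXZ : X q * Zg q = (1 : ℂ) • (Zg q * X q) := by rw [one_smul, X_mul_Zg]
  simpa only [one_smul] using
    gmul_tmul_self_comm_primitive gmul hgmul X_mem_grading Zg_mem_grading hXZ

open DGQS in
theorem statement2 (q : ℂ) (hq : q ≠ 0) (hqroot : ∀ n : ℕ, 0 < n → q ^ n ≠ 1)
    (gmul : (Aq q ⊗[ℂ] Aq q) →ₗ[ℂ] (Aq q ⊗[ℂ] Aq q) →ₗ[ℂ] (Aq q ⊗[ℂ] Aq q))
    (hgmul : ∀ {γ δ : ZMod 2 × ZMod 2} {b c : Aq q},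
      b ∈ grading q γ → c ∈ grading q δ → ∀ a d : Aq q,
        gmul (a ⊗ₜ[ℂ] b) (c ⊗ₜ[ℂ] d) = gsign γ δ • ((a * c) ⊗ₜ[ℂ] (b * d))) :
    gmul (X q ⊗ₜ[ℂ] X q) (X q ⊗ₜ[ℂ] Xi q + Xi q ⊗ₜ[ℂ] X q)
        = q • gmul (X q ⊗ₜ[ℂ] Xi q + Xi q ⊗ₜ[ℂ] X q) (X q ⊗ₜ[ℂ] X q) ∧
    gmul (X q ⊗ₜ[ℂ] X q) (X q ⊗ₜ[ℂ] Th q + Th q ⊗ₜ[ℂ] X q)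
        = q • gmul (X q ⊗ₜ[ℂ] Th q + Th q ⊗ₜ[ℂ] X q) (X q ⊗ₜ[ℂ] X q) ∧
    gmul (X q ⊗ₜ[ℂ] X q) (X q ⊗ₜ[ℂ] Zg q + Zg q ⊗ₜ[ℂ] X q)
        = gmul (X q ⊗ₜ[ℂ] Zg q + Zg q ⊗ₜ[ℂ] X q) (X q ⊗ₜ[ℂ] X q) :=
  statement2_general q gmul hgmul
end

section
/- In the extended double-graded quantum superplane algebra Ā_q, the graded antihomomorphism S determined by S(x) = x⁻¹, S(x⁻¹) = x, S(ξ) = −x⁻¹ξx⁻¹, S(θ) = −x⁻¹θx⁻¹, S(z) = −x⁻¹zx⁻¹ satisfies the antipode axiom on generators: S(x)·x = 1 = x·S(x); S(x)·ξ + S(ξ)·x = 0 and x·S(ξ) + ξ·S(x) = 0; S(x)·θ + S(θ)·x = 0 and x·S(θ) + θ·S(x) = 0; S(x)·z + S(z)·x = 0 and x·S(z) + z·S(x) = 0. Equivalently, μ∘(S⊗Id)∘Δ = η∘ε = μ∘(Id⊗S)∘Δ holds on each generator, where Δ(x) = x⊗x and Δ(u) = x⊗u + u⊗x for u ∈ {ξ,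 θ, z}, ε(x) = 1, ε(ξ) = ε(θ) = ε(z) = 0. -/
/-!
STATEMENT 8: In the extended double-graded quantum superplane algebra `Ā_q`, the graded
antihomomorphism `S` determined by `S(x) = x⁻¹`, `S(x⁻¹) = x`, `S(ξ) = −x⁻¹ξx⁻¹`,
`S(θ) = −x⁻¹θx⁻¹`, `S(z) = −x⁻¹zx⁻¹` satisfies the antipode axiom
`μ∘(S⊗Id)∘Δ = η∘ε = μ∘(Id⊗S)∘Δ` on generators, where `Δ(x) = x⊗x` and
`Δ(u) = x⊗u + u⊗x` for `u ∈ {ξ, θ, z}`, `ε(x) = 1`, `ε(ξ) = ε(θ) = ε(z) = 0`; that is: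
`S(x)·x = 1 = x·S(x)`; `S(x)·ξ + S(ξ)·x = 0` and `x·S(ξ) + ξ·S(x) = 0`;
`S(x)·θ + S(θ)·x = 0` and `x·S(θ) + θ·S(x) = 0`;
`S(x)·z + S(z)·x = 0` and `x·S(z) + z·S(x) = 0`.
-/
open scoped TensorProduct

namespace DGQSext

/-- The standard scalar product `⟨(a,b),(a',b')⟩ = aa' + bb'` on `ℤ₂ × ℤ₂`. -/
def pair2 (γ δ : ZMod 2 × ZMod 2) : ZMod 2 := γ.1 * δ.1 + γ.2 * δ.2

/-- The sign `(−1)^{⟨γ,δ⟩}`. -/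
noncomputable def gsign (γ δ : ZMod 2 × ZMod 2) : ℂ := (-1 : ℂ) ^ (pair2 γ δ).val

/-- The defining relations of the extended double-graded quantum superplane, imposed on the
free algebra on five generators `x = ι 0`, `x⁻¹ = ι 1`, `ξ = ι 2`, `θ = ι 3`, `z = ι 4`:
`xξ = q ξx`, `xθ = q θx`, `xz = zx`, `ξ² = 0`, `θ² = 0`, `ξθ = θξ`, `ξz = −q⁻¹ zξ`,
`θz = −q⁻¹ zθ`, `xx⁻¹ = x⁻¹x = 1`, `x⁻¹ξ = q⁻¹ ξx⁻¹`, `x⁻¹θ = q⁻¹ θx⁻¹`, `x⁻¹z = zx⁻¹`. -/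
inductive Rel (q : ℂ) : FreeAlgebra ℂ (Fin 5) → FreeAlgebra ℂ (Fin 5) → Prop
  | x_xi : Rel q (FreeAlgebra.ι ℂ (0 : Fin 5) * FreeAlgebra.ι ℂ (2 : Fin 5))
      (q • (FreeAlgebra.ι ℂ (2 : Fin 5) * FreeAlgebra.ι ℂ (0 : Fin 5)))
  | x_th : Rel q (FreeAlgebra.ι ℂ (0 : Fin 5) * FreeAlgebra.ι ℂ (3 : Fin 5))
      (q • (FreeAlgebra.ι ℂ (3 : Fin 5) * FreeAlgebra.ι ℂ (0 : Fin 5)))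
  | x_z : Rel q (FreeAlgebra.ι ℂ (0 : Fin 5) * FreeAlgebra.ι ℂ (4 : Fin 5))
      (FreeAlgebra.ι ℂ (4 : Fin 5) * FreeAlgebra.ι ℂ (0 : Fin 5))
  | xi_sq : Rel q (FreeAlgebra.ι ℂ (2 : Fin 5) * FreeAlgebra.ι ℂ (2 : Fin 5)) 0
  | th_sq : Rel q (FreeAlgebra.ι ℂ (3 : Fin 5) * FreeAlgebra.ι ℂ (3 : Fin 5)) 0
  | xi_th : Rel q (FreeAlgebra.ι ℂ (2 : Fin 5) * FreeAlgebra.ι ℂ (3 : Fin 5))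
      (FreeAlgebra.ι ℂ (3 : Fin 5) * FreeAlgebra.ι ℂ (2 : Fin 5))
  | xi_z : Rel q (FreeAlgebra.ι ℂ (2 : Fin 5) * FreeAlgebra.ι ℂ (4 : Fin 5))
      ((-q⁻¹) • (FreeAlgebra.ι ℂ (4 : Fin 5) * FreeAlgebra.ι ℂ (2 : Fin 5)))
  | th_z : Rel q (FreeAlgebra.ι ℂ (3 : Fin 5) * FreeAlgebra.ι ℂ (4 : Fin 5))
      ((-q⁻¹) • (FreeAlgebra.ι ℂ (4 : Fin 5) * FreeAlgebra.ι ℂ (3 : Fin 5)))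
  | x_xinv : Rel q (FreeAlgebra.ι ℂ (0 : Fin 5) * FreeAlgebra.ι ℂ (1 : Fin 5)) 1
  | xinv_x : Rel q (FreeAlgebra.ι ℂ (1 : Fin 5) * FreeAlgebra.ι ℂ (0 : Fin 5)) 1
  | xinv_xi : Rel q (FreeAlgebra.ι ℂ (1 : Fin 5) * FreeAlgebra.ι ℂ (2 : Fin 5))
      (q⁻¹ • (FreeAlgebra.ι ℂ (2 : Fin 5) * FreeAlgebra.ι ℂ (1 : Fin 5)))
  | xinv_th : Rel q (FreeAlgebra.ι ℂ (1 : Fin 5) * FreeAlgebra.ι ℂ (3 : Fin 5))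
      (q⁻¹ • (FreeAlgebra.ι ℂ (3 : Fin 5) * FreeAlgebra.ι ℂ (1 : Fin 5)))
  | xinv_z : Rel q (FreeAlgebra.ι ℂ (1 : Fin 5) * FreeAlgebra.ι ℂ (4 : Fin 5))
      (FreeAlgebra.ι ℂ (4 : Fin 5) * FreeAlgebra.ι ℂ (1 : Fin 5))

/-- The algebra of polynomials on the extended double-graded quantum superplane. -/
abbrev Abar (q : ℂ) : Type := RingQuot (Rel q)

/-- The generators of `Ā_q`. -/
noncomputable def gen (q : ℂ) (i : Fin 5) : Abar q :=
  RingQuot.mkAlgHom ℂ (Rel q) (FreeAlgebra.ι ℂ i)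

/-- The generator `x`, of degree `(0,0)`. -/
noncomputable def X (q : ℂ) : Abar q := gen q 0
/-- The generator `x⁻¹`, of degree `(0,0)`. -/
noncomputable def Xinv (q : ℂ) : Abar q := gen q 1
/-- The generator `ξ`, of degree `(0,1)`. -/
noncomputable def Xi (q : ℂ) : Abar q := gen q 2
/-- The generator `θ`, of degree `(1,0)`. -/
noncomputable def Th (q : ℂ) : Abar q := gen q 3
/-- The generator `z`, of degree `(1,1)`. -/
noncomputable def Zg (q : ℂ) : Abar q := gen q 4

/-- The `ℤ₂ × ℤ₂`-degrees of the generators. -/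
def dg : Fin 5 → ZMod 2 × ZMod 2 := ![(0, 0), (0, 0), (0, 1), (1, 0), (1, 1)]

/-- The homogeneous component of degree `γ` of `Ā_q`: the span of the images of the
words in the generators of total degree `γ`. -/
noncomputable def grading (q : ℂ) (γ : ZMod 2 × ZMod 2) : Submodule ℂ (Abar q) :=
  Submodule.span ℂ
    { a | ∃ w : List (Fin 5), (w.map dg).sum = γ ∧ a = (w.map (gen q)).prod }

end DGQSext

/-!
Only `x⁻¹x = 1 = xx⁻¹` is needed: for any `u`, the term `−x⁻¹ux⁻¹` coming from `S(u)` cancels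
against `x` on either side, leaving `−x⁻¹u` resp. `−ux⁻¹`, which kills the other summand.
-/

section AntipodeOnGenerators

variable {R : Type*} [Ring R] {s x : R}

theorem mul_add_neg_mul_mul_mul_eq_zero (h : s * x = 1) (u : R) :
    s * u + -(s * u * s) * x = 0 := by
  rw [neg_mul, mul_assoc (s * u), h, mul_one, add_neg_cancel]

theorem mul_neg_mul_mul_add_mul_eq_zero (h : x * s = 1) (u : R) :
    x * -(s * u * s) + u * s = 0 := by
  rw [mul_neg, ← mul_assoc, ← mul_assoc, h, one_mul, neg_add_cancel]

end AntipodeOnGenerators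

namespace DGQSext

theorem Xinv_mul_X (q : ℂ) : Xinv q * X q = 1 := by
  simpa only [Xinv, X, gen, map_mul, map_one] using RingQuot.mkAlgHom_rel ℂ (Rel.xinv_x (q := q))

theorem X_mul_Xinv (q : ℂ) : X q * Xinv q = 1 := by
  simpa only [Xinv, X, gen, map_mul, map_one] using RingQuot.mkAlgHom_rel ℂ (Rel.x_xinv (q := q))

end DGQSext

open DGQSext in
theorem statement8_general (q : ℂ) :
    -- `S(x)·x = 1 = x·S(x)`
    Xinv q * X q = 1 ∧ X q * Xinv q = 1 ∧
    -- `S(x)·ξ + S(ξ)·x = 0` and `x·S(ξ) + ξ·S(x) = 0`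
    Xinv q * Xi q + (-(Xinv q * Xi q * Xinv q)) * X q = 0 ∧
    X q * (-(Xinv q * Xi q * Xinv q)) + Xi q * Xinv q = 0 ∧
    -- `S(x)·θ + S(θ)·x = 0` and `x·S(θ) + θ·S(x) = 0`
    Xinv q * Th q + (-(Xinv q * Th q * Xinv q)) * X q = 0 ∧
    X q * (-(Xinv q * Th q * Xinv q)) + Th q * Xinv q = 0 ∧
    -- `S(x)·z + S(z)·x = 0` and `x·S(z) + z·S(x) = 0`
    Xinv q * Zg q + (-(Xinv q * Zg q * Xinv q)) * X q = 0 ∧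
    X q * (-(Xinv q * Zg q * Xinv q)) + Zg q * Xinv q = 0 := by
  have left := mul_add_neg_mul_mul_mul_eq_zero (Xinv_mul_X q)
  have right := mul_neg_mul_mul_add_mul_eq_zero (X_mul_Xinv q)
  exact ⟨Xinv_mul_X q, X_mul_Xinv q, left _, right _, left _, right _, left _, right _⟩

open DGQSext in
theorem statement8 (q : ℂ) (hq : q ≠ 0) (hqroot : ∀ n : ℕ, 0 < n → q ^ n ≠ 1) :
    -- `S(x)·x = 1 = x·S(x)`
    Xinv q * X q = 1 ∧ X q * Xinv q = 1 ∧
    -- `S(x)·ξ + S(ξ)·x = 0` and `x·S(ξ) + ξ·S(x) = 0`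
    Xinv q * Xi q + (-(Xinv q * Xi q * Xinv q)) * X q = 0 ∧
    X q * (-(Xinv q * Xi q * Xinv q)) + Xi q * Xinv q = 0 ∧
    -- `S(x)·θ + S(θ)·x = 0` and `x·S(θ) + θ·S(x) = 0`
    Xinv q * Th q + (-(Xinv q * Th q * Xinv q)) * X q = 0 ∧
    X q * (-(Xinv q * Th q * Xinv q)) + Th q * Xinv q = 0 ∧
    -- `S(x)·z + S(z)·x = 0` and `x·S(z) + z·S(x) = 0`
    Xinv q * Zg q + (-(Xinv q * Zg q * Xinv q)) * X q = 0 ∧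
    X q * (-(Xinv q * Zg q * Xinv q)) + Zg q * Xinv q = 0 :=
  statement8_general q
end

section
/- In the graded tensor product Ā_q ⊗ Ā_q, the elements X⁻¹ = x⁻¹⊗x⁻¹, Ξ = x⊗ξ + ξ⊗x, Θ = x⊗θ + θ⊗x and Z = x⊗z + z⊗x satisfy X⁻¹·Ξ = q⁻¹ Ξ·X⁻¹, X⁻¹·Θ = q⁻¹ Θ·X⁻¹, X⁻¹·Z = Z·X⁻¹, and X⁻¹ is a two-sided inverse of X = x⊗x. Consequently Δ extends from A_q to a well-defined algebra morphism on the extended algebra Ā_q with Δ(x⁻¹) = x⁻¹⊗x⁻¹. -/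
/-!
STATEMENT 10: In the graded tensor product `Ā_q ⊗ Ā_q`, the elements `X⁻¹ = x⁻¹⊗x⁻¹`,
`Ξ = x⊗ξ + ξ⊗x`, `Θ = x⊗θ + θ⊗x` and `Z = x⊗z + z⊗x` satisfy `X⁻¹·Ξ = q⁻¹ Ξ·X⁻¹`,
`X⁻¹·Θ = q⁻¹ Θ·X⁻¹`, `X⁻¹·Z = Z·X⁻¹`, and `X⁻¹` is a two-sided inverse of `X = x⊗x`.
Consequently `Δ` extends from `A_q` to a well-defined algebra morphism on the extended
algebra `Ā_q` with `Δ(x⁻¹) = x⁻¹⊗x⁻¹`.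
The graded tensor product carries the multiplication
`(a⊗b)(c⊗d) = (−1)^{⟨deg b, deg c⟩} ac ⊗ bd` on homogeneous elements.
-/
open scoped TensorProduct

/-!
Since `Ā_q` is presented by generators and relations, `Δ` is well defined as soon as the
prescribed images of the generators satisfy the defining relations in the graded tensor product.
That product is associative and unital with unit `1 ⊗ 1` because the sign `(−1)^{⟨·,·⟩}` is a
bicharacter of `ℤ₂ × ℤ₂` and homogeneous elements span `Ā_q`; the relations are then checked
generator by generator. The identities for `X⁻¹` are the images under `Δ` of the relations
involving `x⁻¹`.
-/

open TensorProduct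

section GradedTensorMul

theorem TensorProduct.induction_on_homogeneous {R M N ι κ : Type*} [CommSemiring R]
    [AddCommMonoid M] [AddCommMonoid N] [Module R M] [Module R N]
    {𝒜 : ι → Submodule R M} {ℬ : κ → Submodule R N} (h𝒜 : ⨆ i, 𝒜 i = ⊤) (hℬ : ⨆ j, ℬ j = ⊤)
    {motive : M ⊗[R] N → Prop} (t : M ⊗[R] N) (zero : motive 0)
    (add : ∀ x y, motive x → motive y → motive (x + y))
    (tmul : ∀ {i j} {m n}, m ∈ 𝒜 i → n ∈ ℬ j → motive (m ⊗ₜ[R] n)) : motive t := by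
  induction t using TensorProduct.induction_on with
  | zero => exact zero
  | add x y hx hy => exact add x y hx hy
  | tmul m n =>
    refine Submodule.iSup_induction 𝒜 (motive := fun m ↦ motive (m ⊗ₜ n))
      (h𝒜 ▸ Submodule.mem_top) (fun i m hm ↦ ?_) (by simpa using zero)
      (fun m m' ↦ by simpa [add_tmul] using add _ _)
    exact Submodule.iSup_induction ℬ (motive := fun n ↦ motive (m ⊗ₜ n))
      (hℬ ▸ Submodule.mem_top) (fun j n hn ↦ tmul hm hn) (by simpa using zero)
      (fun n n' ↦ by simpa [tmul_add] using add _ _)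

structure IsBicharacter {ι M : Type*} [AddZeroClass ι] [MulOneClass M] (ε : ι → ι → M) :
    Prop where
  zero_left : ∀ δ, ε 0 δ = 1
  zero_right : ∀ γ, ε γ 0 = 1
  add_left : ∀ γ γ' δ, ε (γ + γ') δ = ε γ δ * ε γ' δ
  add_right : ∀ γ δ δ', ε γ (δ + δ') = ε γ δ * ε γ δ'

variable {R A ι : Type*} [CommRing R] [Ring A] [Algebra R A]

theorem mul_mem_iSup_of_gradedMul [Add ι] {𝒜 : ι → Submodule R A} [SetLike.GradedMul 𝒜]
    {a b : A} (ha : a ∈ ⨆ i, 𝒜 i) (hb : b ∈ ⨆ i, 𝒜 i) : a * b ∈ ⨆ i, 𝒜 i := by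
  refine Submodule.iSup_induction 𝒜 (motive := (· * b ∈ _)) ha (fun i a ha ↦ ?_) (by simp)
    (fun a a' ha ha' ↦ by simpa [add_mul] using add_mem ha ha')
  refine Submodule.iSup_induction 𝒜 (motive := (a * · ∈ _)) hb (fun j b hb ↦ ?_) (by simp)
    (fun b b' hb hb' ↦ by simpa [mul_add] using add_mem hb hb')
  exact Submodule.mem_iSup_of_mem _ (SetLike.mul_mem_graded ha hb)

def IsGradedTensorMul (𝒜 : ι → Submodule R A) (ε : ι → ι → R)
    (μ : A ⊗[R] A →ₗ[R] A ⊗[R] A →ₗ[R] A ⊗[R] A) : Prop :=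
  ∀ ⦃γ δ : ι⦄ ⦃b c : A⦄, b ∈ 𝒜 γ → c ∈ 𝒜 δ → ∀ a d : A,
    μ (a ⊗ₜ[R] b) (c ⊗ₜ[R] d) = ε γ δ • ((a * c) ⊗ₜ[R] (b * d))

structure IsUnitalAssocMul (μ : A ⊗[R] A →ₗ[R] A ⊗[R] A →ₗ[R] A ⊗[R] A) : Prop where
  assoc : ∀ t u v, μ (μ t u) v = μ t (μ u v)
  one_left : ∀ t, μ (1 ⊗ₜ 1) t = t
  one_right : ∀ t, μ t (1 ⊗ₜ 1) = t

namespace IsGradedTensorMul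

variable [AddMonoid ι] {𝒜 : ι → Submodule R A} {ε : ι → ι → R}
  {μ : A ⊗[R] A →ₗ[R] A ⊗[R] A →ₗ[R] A ⊗[R] A}

theorem one_left [SetLike.GradedOne 𝒜] (hμ : IsGradedTensorMul 𝒜 ε μ) (h𝒜 : ⨆ i, 𝒜 i = ⊤)
    (hε : ∀ δ, ε 0 δ = 1) (t : A ⊗[R] A) : μ (1 ⊗ₜ 1) t = t := by
  induction t using TensorProduct.induction_on_homogeneous h𝒜 h𝒜 with
  | zero => exact map_zero _
  | add x y hx hy => rw [map_add, hx, hy]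
  | tmul ha hb => rw [hμ (SetLike.one_mem_graded 𝒜) ha, hε, one_smul, one_mul, one_mul]

theorem one_right [SetLike.GradedOne 𝒜] (hμ : IsGradedTensorMul 𝒜 ε μ) (h𝒜 : ⨆ i, 𝒜 i = ⊤)
    (hε : ∀ γ, ε γ 0 = 1) (t : A ⊗[R] A) : μ t (1 ⊗ₜ 1) = t := by
  induction t using TensorProduct.induction_on_homogeneous h𝒜 h𝒜 with
  | zero => rw [map_zero, LinearMap.zero_apply]
  | add x y hx hy => rw [map_add, LinearMap.add_apply, hx, hy]
  | tmul ha hb => rw [hμ hb (SetLike.one_mem_graded 𝒜), hε, one_smul, mul_one, mul_one]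

theorem assoc [SetLike.GradedMul 𝒜] (hμ : IsGradedTensorMul 𝒜 ε μ) (h𝒜 : ⨆ i, 𝒜 i = ⊤)
    (hε : IsBicharacter ε) (t u v : A ⊗[R] A) : μ (μ t u) v = μ t (μ u v) := by
  induction t using TensorProduct.induction_on_homogeneous h𝒜 h𝒜 generalizing u with
  | zero => simp only [map_zero, LinearMap.zero_apply]
  | add x y hx hy => simp only [map_add, LinearMap.add_apply, hx, hy]
  | @tmul β₁ β₂ a b ha hb =>
    induction u using TensorProduct.induction_on_homogeneous h𝒜 h𝒜 generalizing v with
    | zero => simp only [map_zero, LinearMap.zero_apply]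
    | add x y hx hy => simp only [map_add, LinearMap.add_apply, hx, hy]
    | @tmul γ₁ γ₂ c d hc hd =>
      induction v using TensorProduct.induction_on_homogeneous h𝒜 h𝒜 with
      | zero => simp only [map_zero]
      | add x y hx hy => simp only [map_add, hx, hy]
      | @tmul δ₁ δ₂ e f he hf =>
        rw [hμ hb hc, hμ hd he, map_smul, map_smul, LinearMap.smul_apply,
          hμ (SetLike.mul_mem_graded hb hd) he, hμ hb (SetLike.mul_mem_graded hc he), smul_smul,
          smul_smul, mul_assoc a, mul_assoc b, hε.add_left, hε.add_right]
        -- both sides carry the sign `ε β₂ γ₁ * ε β₂ δ₁ * ε γ₂ δ₁`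
        congr 1
        ring

theorem isUnitalAssocMul [SetLike.GradedMonoid 𝒜] (hμ : IsGradedTensorMul 𝒜 ε μ) (h𝒜 : ⨆ i, 𝒜 i = ⊤)
    (hε : IsBicharacter ε) : IsUnitalAssocMul μ :=
  ⟨hμ.assoc h𝒜 hε, hμ.one_left h𝒜 hε.zero_left, hμ.one_right h𝒜 hε.zero_right⟩

end IsGradedTensorMul

/-- `A ⊗[R] A` already carries the untwisted product, so the ring with multiplication `μ`
lives on a type synonym, tagged by `μ`. -/
def GradedTensor (_ : A ⊗[R] A →ₗ[R] A ⊗[R] A →ₗ[R] A ⊗[R] A) : Type _ := A ⊗[R] A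

namespace GradedTensor

variable (μ : A ⊗[R] A →ₗ[R] A ⊗[R] A →ₗ[R] A ⊗[R] A)

instance : AddCommGroup (GradedTensor μ) := inferInstanceAs (AddCommGroup (A ⊗[R] A))

instance : Module R (GradedTensor μ) := inferInstanceAs (Module R (A ⊗[R] A))

instance : Mul (GradedTensor μ) := ⟨fun t u ↦ μ t u⟩

instance : One (GradedTensor μ) := ⟨(1 : A) ⊗ₜ[R] (1 : A)⟩

instance [h : Fact (IsUnitalAssocMul μ)] : Ring (GradedTensor μ) :=
  { (inferInstance : AddCommGroup (GradedTensor μ)) with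
    mul_assoc := h.out.assoc
    one_mul := h.out.one_left
    mul_one := h.out.one_right
    left_distrib := fun t ↦ map_add (μ t)
    right_distrib := fun t u v ↦ LinearMap.congr_fun (map_add μ t u) v
    zero_mul := fun t ↦ LinearMap.congr_fun (map_zero μ) t
    mul_zero := fun t ↦ map_zero (μ t)
    natCast := fun n ↦ n • (1 : GradedTensor μ)
    natCast_zero := zero_nsmul _
    natCast_succ := fun n ↦ succ_nsmul _ n
    intCast := fun n ↦ n • (1 : GradedTensor μ)
    intCast_ofNat := fun n ↦ natCast_zsmul _ n
    intCast_negSucc := fun n ↦ negSucc_zsmul _ n }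

instance [Fact (IsUnitalAssocMul μ)] : Algebra R (GradedTensor μ) :=
  Algebra.ofModule (fun r t u ↦ LinearMap.congr_fun (map_smul μ r t) u)
    (fun r t u ↦ map_smul (μ t) r u)

variable {μ}

def of : A ⊗[R] A ≃ₗ[R] GradedTensor μ := LinearEquiv.refl R _

theorem of_mul_of (t u : A ⊗[R] A) : of t * of u = (of (μ t u) : GradedTensor μ) := rfl

theorem smul_of (r : R) (t : A ⊗[R] A) : r • of t = (of (r • t) : GradedTensor μ) := rfl

theorem one_def : (1 : GradedTensor μ) = of (1 ⊗ₜ 1) := rfl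

theorem of_symm_mul (t u : GradedTensor μ) : of.symm (t * u) = μ (of.symm t) (of.symm u) := rfl

theorem of_symm_one : of.symm (1 : GradedTensor μ) = 1 ⊗ₜ 1 := rfl

end GradedTensor

end GradedTensorMul

namespace DGQSext

variable {q : ℂ}

instance : SetLike.GradedMonoid (grading q) where
  one_mem := Submodule.subset_span ⟨[], by simp, by simp⟩
  mul_mem := by
    intro γ δ a b ha hb
    induction ha using Submodule.span_induction with
    | mem u hu =>
      obtain ⟨w₁, hw₁, rfl⟩ := hu
      induction hb using Submodule.span_induction with
      | mem v hv =>
        obtain ⟨w₂, hw₂, rfl⟩ := hv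
        exact Submodule.subset_span ⟨w₁ ++ w₂, by simp [hw₁, hw₂], by simp⟩
      | zero => simp
      | add x y _ _ hx hy => simpa [mul_add] using add_mem hx hy
      | smul r x _ hx => simpa using Submodule.smul_mem _ r hx
    | zero => simp
    | add x y _ _ hx hy => simpa [add_mul] using add_mem hx hy
    | smul r x _ hx => simpa using Submodule.smul_mem _ r hx

theorem gen_mem_grading (i : Fin 5) : gen q i ∈ grading q (dg i) :=
  Submodule.subset_span ⟨[i], by simp, by simp⟩

theorem iSup_grading : ⨆ γ, grading q γ = ⊤ := by
  rw [eq_top_iff]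
  rintro a -
  obtain ⟨f, rfl⟩ := RingQuot.mkAlgHom_surjective ℂ (Rel q) a
  induction f using FreeAlgebra.induction with
  | grade0 r =>
    rw [AlgHom.commutes, Algebra.algebraMap_eq_smul_one]
    exact Submodule.smul_mem _ r (Submodule.mem_iSup_of_mem 0 (SetLike.one_mem_graded _))
  | grade1 i => exact Submodule.mem_iSup_of_mem _ (gen_mem_grading i)
  | mul x y hx hy => rw [map_mul]; exact mul_mem_iSup_of_gradedMul hx hy
  | add x y hx hy => rw [map_add]; exact add_mem hx hy

theorem gsign_eq_ite (γ δ : ZMod 2 × ZMod 2) : gsign γ δ = if pair2 γ δ = 0 then 1 else -1 := by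
  unfold gsign
  generalize pair2 γ δ = p
  obtain rfl | rfl : p = 0 ∨ p = 1 := by revert p; decide
  · simp
  · simp [ZMod.val_one]

theorem isBicharacter_gsign : IsBicharacter gsign := by
  have gsign_of_pair2_eq (γ δ : ZMod 2 × ZMod 2) (p p' : ZMod 2) (h : pair2 γ δ = p + p') :
      gsign γ δ = (-1) ^ p.val * (-1) ^ p'.val := by
    rw [gsign, h, ZMod.val_add, ← neg_one_pow_eq_pow_mod_two, pow_add]
  refine ⟨fun δ ↦ ?_, fun γ ↦ ?_, fun γ γ' δ ↦ gsign_of_pair2_eq _ _ _ _ ?_,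
    fun γ δ δ' ↦ gsign_of_pair2_eq _ _ _ _ ?_⟩
  · simp [gsign, pair2]
  · simp [gsign, pair2]
  · simp only [pair2, Prod.fst_add, Prod.snd_add]; ring
  · simp only [pair2, Prod.fst_add, Prod.snd_add]; ring

section Relations

variable (q)

theorem x_mul_xi : X q * Xi q = q • (Xi q * X q) := by
  simpa only [map_mul, map_smul, X, Xi, gen] using RingQuot.mkAlgHom_rel ℂ (Rel.x_xi (q := q))

theorem x_mul_theta : X q * Th q = q • (Th q * X q) := by
  simpa only [map_mul, map_smul, X, Th, gen] using RingQuot.mkAlgHom_rel ℂ (Rel.x_th (q := q))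

theorem x_mul_z : X q * Zg q = Zg q * X q := by
  simpa only [map_mul, X, Zg, gen] using RingQuot.mkAlgHom_rel ℂ (Rel.x_z (q := q))

theorem xi_mul_xi : Xi q * Xi q = 0 := by
  simpa only [map_mul, map_zero, Xi, gen] using RingQuot.mkAlgHom_rel ℂ (Rel.xi_sq (q := q))

theorem theta_mul_theta : Th q * Th q = 0 := by
  simpa only [map_mul, map_zero, Th, gen] using RingQuot.mkAlgHom_rel ℂ (Rel.th_sq (q := q))

theorem xi_mul_theta : Xi q * Th q = Th q * Xi q := by
  simpa only [map_mul, Xi, Th, gen] using RingQuot.mkAlgHom_rel ℂ (Rel.xi_th (q := q))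

theorem xi_mul_z : Xi q * Zg q = (-q⁻¹) • (Zg q * Xi q) := by
  simpa only [map_mul, map_smul, Xi, Zg, gen] using RingQuot.mkAlgHom_rel ℂ (Rel.xi_z (q := q))

theorem theta_mul_z : Th q * Zg q = (-q⁻¹) • (Zg q * Th q) := by
  simpa only [map_mul, map_smul, Th, Zg, gen] using RingQuot.mkAlgHom_rel ℂ (Rel.th_z (q := q))

theorem x_mul_xinv : X q * Xinv q = 1 := by
  simpa only [map_mul, map_one, X, Xinv, gen] using RingQuot.mkAlgHom_rel ℂ (Rel.x_xinv (q := q))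

theorem xinv_mul_x : Xinv q * X q = 1 := by
  simpa only [map_mul, map_one, X, Xinv, gen] using RingQuot.mkAlgHom_rel ℂ (Rel.xinv_x (q := q))

theorem xinv_mul_xi : Xinv q * Xi q = q⁻¹ • (Xi q * Xinv q) := by
  simpa only [map_mul, map_smul, Xinv, Xi, gen] using RingQuot.mkAlgHom_rel ℂ (Rel.xinv_xi (q := q))

theorem xinv_mul_theta : Xinv q * Th q = q⁻¹ • (Th q * Xinv q) := by
  simpa only [map_mul, map_smul, Xinv, Th, gen] using RingQuot.mkAlgHom_rel ℂ (Rel.xinv_th (q := q))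

theorem xinv_mul_z : Xinv q * Zg q = Zg q * Xinv q := by
  simpa only [map_mul, Xinv, Zg, gen] using RingQuot.mkAlgHom_rel ℂ (Rel.xinv_z (q := q))

end Relations

variable (q) in
noncomputable def coproductGen : Fin 5 → Abar q ⊗[ℂ] Abar q :=
  ![gen q 0 ⊗ₜ gen q 0, gen q 1 ⊗ₜ gen q 1, gen q 0 ⊗ₜ gen q 2 + gen q 2 ⊗ₜ gen q 0,
    gen q 0 ⊗ₜ gen q 3 + gen q 3 ⊗ₜ gen q 0, gen q 0 ⊗ₜ gen q 4 + gen q 4 ⊗ₜ gen q 0]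

variable {gmul : (Abar q ⊗[ℂ] Abar q) →ₗ[ℂ] (Abar q ⊗[ℂ] Abar q) →ₗ[ℂ] (Abar q ⊗[ℂ] Abar q)}

theorem gmul_tmul_gen_gen_tmul (hgmul : IsGradedTensorMul (grading q) gsign gmul)
    (i j : Fin 5) (a d : Abar q) :
    gmul (a ⊗ₜ gen q i) (gen q j ⊗ₜ d) =
      (if pair2 (dg i) (dg j) = 0 then 1 else -1 : ℂ) • ((a * gen q j) ⊗ₜ (gen q i * d)) := by
  rw [hgmul (gen_mem_grading i) (gen_mem_grading j), gsign_eq_ite]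

theorem lift_coproductGen_eq_of_rel (hq : q ≠ 0) (hgmul : IsGradedTensorMul (grading q) gsign gmul)
    [Fact (IsUnitalAssocMul gmul)] ⦃a b : FreeAlgebra ℂ (Fin 5)⦄ (r : Rel q a b) :
    FreeAlgebra.lift ℂ (GradedTensor.of (μ := gmul) ∘ coproductGen q) a =
      FreeAlgebra.lift ℂ (GradedTensor.of (μ := gmul) ∘ coproductGen q) b := by
  -- expand both sides with the sign rule, then normal-order the words of length two
  -- with the relations of `Ā_q`
  cases r <;>
    simp only [map_mul, map_smul, map_one, map_zero, FreeAlgebra.lift_ι_apply,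
      Function.comp_apply, GradedTensor.of_mul_of, GradedTensor.one_def] <;>
    simp only [GradedTensor.smul_of, EmbeddingLike.apply_eq_iff_eq,
      LinearEquiv.map_eq_zero_iff] <;>
    simp only [coproductGen, Matrix.cons_val, map_add, LinearMap.add_apply,
      gmul_tmul_gen_gen_tmul hgmul] <;>
    simp +decide only [← X.eq_1, ← Xinv.eq_1, ← Xi.eq_1, ← Th.eq_1, ← Zg.eq_1, ite_true,
      ite_false, x_mul_xi, x_mul_theta, x_mul_z, xi_mul_xi, theta_mul_theta, xi_mul_theta,
      xi_mul_z, theta_mul_z, x_mul_xinv, xinv_mul_x, xinv_mul_xi, xinv_mul_theta, xinv_mul_z,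
      one_smul, ← smul_tmul', tmul_smul, zero_tmul, tmul_zero] <;>
    match_scalars <;> field_simp <;> ring

theorem exists_coproduct (hq : q ≠ 0) (hgmul : IsGradedTensorMul (grading q) gsign gmul) :
    ∃ D : Abar q →ₗ[ℂ] Abar q ⊗[ℂ] Abar q,
      D 1 = 1 ⊗ₜ[ℂ] 1 ∧
      (∀ a b : Abar q, D (a * b) = gmul (D a) (D b)) ∧
      D (X q) = X q ⊗ₜ[ℂ] X q ∧
      D (Xinv q) = Xinv q ⊗ₜ[ℂ] Xinv q ∧
      D (Xi q) = X q ⊗ₜ[ℂ] Xi q + Xi q ⊗ₜ[ℂ] X q ∧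
      D (Th q) = X q ⊗ₜ[ℂ] Th q + Th q ⊗ₜ[ℂ] X q ∧
      D (Zg q) = X q ⊗ₜ[ℂ] Zg q + Zg q ⊗ₜ[ℂ] X q := by
  have : Fact (IsUnitalAssocMul gmul) :=
    ⟨hgmul.isUnitalAssocMul iSup_grading isBicharacter_gsign⟩
  let Δ : Abar q →ₐ[ℂ] GradedTensor gmul :=
    RingQuot.liftAlgHom ℂ ⟨FreeAlgebra.lift ℂ (GradedTensor.of ∘ coproductGen q),
      lift_coproductGen_eq_of_rel hq hgmul⟩
  have Δ_gen (i : Fin 5) : GradedTensor.of.symm (Δ (gen q i)) = coproductGen q i := by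
    simp [Δ, gen]
  refine ⟨GradedTensor.of.symm.toLinearMap ∘ₗ Δ.toLinearMap, ?_, fun a b ↦ ?_, Δ_gen 0, Δ_gen 1,
    Δ_gen 2, Δ_gen 3, Δ_gen 4⟩
  · simp [GradedTensor.of_symm_one]
  · simp [GradedTensor.of_symm_mul]

end DGQSext

open DGQSext in
theorem statement10_general (q : ℂ) (hq : q ≠ 0)
    (gmul : (Abar q ⊗[ℂ] Abar q) →ₗ[ℂ] (Abar q ⊗[ℂ] Abar q) →ₗ[ℂ] (Abar q ⊗[ℂ] Abar q))
    (hgmul : ∀ {γ δ : ZMod 2 × ZMod 2} {b c : Abar q},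
      b ∈ grading q γ → c ∈ grading q δ → ∀ a d : Abar q,
        gmul (a ⊗ₜ[ℂ] b) (c ⊗ₜ[ℂ] d) = gsign γ δ • ((a * c) ⊗ₜ[ℂ] (b * d))) :
    gmul (Xinv q ⊗ₜ[ℂ] Xinv q) (X q ⊗ₜ[ℂ] Xi q + Xi q ⊗ₜ[ℂ] X q)
        = q⁻¹ • gmul (X q ⊗ₜ[ℂ] Xi q + Xi q ⊗ₜ[ℂ] X q) (Xinv q ⊗ₜ[ℂ] Xinv q) ∧
    gmul (Xinv q ⊗ₜ[ℂ] Xinv q) (X q ⊗ₜ[ℂ] Th q + Th q ⊗ₜ[ℂ] X q)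
        = q⁻¹ • gmul (X q ⊗ₜ[ℂ] Th q + Th q ⊗ₜ[ℂ] X q) (Xinv q ⊗ₜ[ℂ] Xinv q) ∧
    gmul (Xinv q ⊗ₜ[ℂ] Xinv q) (X q ⊗ₜ[ℂ] Zg q + Zg q ⊗ₜ[ℂ] X q)
        = gmul (X q ⊗ₜ[ℂ] Zg q + Zg q ⊗ₜ[ℂ] X q) (Xinv q ⊗ₜ[ℂ] Xinv q) ∧
    gmul (Xinv q ⊗ₜ[ℂ] Xinv q) (X q ⊗ₜ[ℂ] X q) = 1 ⊗ₜ[ℂ] 1 ∧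
    gmul (X q ⊗ₜ[ℂ] X q) (Xinv q ⊗ₜ[ℂ] Xinv q) = 1 ⊗ₜ[ℂ] 1 ∧
    ∃ D : Abar q →ₗ[ℂ] Abar q ⊗[ℂ] Abar q,
      D 1 = 1 ⊗ₜ[ℂ] 1 ∧
      (∀ a b : Abar q, D (a * b) = gmul (D a) (D b)) ∧
      D (X q) = X q ⊗ₜ[ℂ] X q ∧
      D (Xinv q) = Xinv q ⊗ₜ[ℂ] Xinv q ∧
      D (Xi q) = X q ⊗ₜ[ℂ] Xi q + Xi q ⊗ₜ[ℂ] X q ∧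
      D (Th q) = X q ⊗ₜ[ℂ] Th q + Th q ⊗ₜ[ℂ] X q ∧
      D (Zg q) = X q ⊗ₜ[ℂ] Zg q + Zg q ⊗ₜ[ℂ] X q := by
  obtain ⟨D, D_one, D_mul, D_x, D_xinv, D_xi, D_theta, D_z⟩ := exists_coproduct hq @hgmul
  refine ⟨?_, ?_, ?_, ?_, ?_, D, D_one, D_mul, D_x, D_xinv, D_xi, D_theta, D_z⟩
  · rw [← D_xinv, ← D_xi, ← D_mul, xinv_mul_xi, map_smul, D_mul]
  · rw [← D_xinv, ← D_theta, ← D_mul, xinv_mul_theta, map_smul, D_mul]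
  · rw [← D_xinv, ← D_z, ← D_mul, xinv_mul_z, D_mul]
  · rw [← D_x, ← D_xinv, ← D_mul, xinv_mul_x, D_one]
  · rw [← D_x, ← D_xinv, ← D_mul, x_mul_xinv, D_one]

open DGQSext in
theorem statement10 (q : ℂ) (hq : q ≠ 0) (hqroot : ∀ n : ℕ, 0 < n → q ^ n ≠ 1)
    (gmul : (Abar q ⊗[ℂ] Abar q) →ₗ[ℂ] (Abar q ⊗[ℂ] Abar q) →ₗ[ℂ] (Abar q ⊗[ℂ] Abar q))
    (hgmul : ∀ {γ δ : ZMod 2 × ZMod 2} {b c : Abar q},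
      b ∈ grading q γ → c ∈ grading q δ → ∀ a d : Abar q,
        gmul (a ⊗ₜ[ℂ] b) (c ⊗ₜ[ℂ] d) = gsign γ δ • ((a * c) ⊗ₜ[ℂ] (b * d))) :
    gmul (Xinv q ⊗ₜ[ℂ] Xinv q) (X q ⊗ₜ[ℂ] Xi q + Xi q ⊗ₜ[ℂ] X q)
        = q⁻¹ • gmul (X q ⊗ₜ[ℂ] Xi q + Xi q ⊗ₜ[ℂ] X q) (Xinv q ⊗ₜ[ℂ] Xinv q) ∧
    gmul (Xinv q ⊗ₜ[ℂ] Xinv q) (X q ⊗ₜ[ℂ] Th q + Th q ⊗ₜ[ℂ] X q)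
        = q⁻¹ • gmul (X q ⊗ₜ[ℂ] Th q + Th q ⊗ₜ[ℂ] X q) (Xinv q ⊗ₜ[ℂ] Xinv q) ∧
    gmul (Xinv q ⊗ₜ[ℂ] Xinv q) (X q ⊗ₜ[ℂ] Zg q + Zg q ⊗ₜ[ℂ] X q)
        = gmul (X q ⊗ₜ[ℂ] Zg q + Zg q ⊗ₜ[ℂ] X q) (Xinv q ⊗ₜ[ℂ] Xinv q) ∧
    gmul (Xinv q ⊗ₜ[ℂ] Xinv q) (X q ⊗ₜ[ℂ] X q) = 1 ⊗ₜ[ℂ] 1 ∧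
    gmul (X q ⊗ₜ[ℂ] X q) (Xinv q ⊗ₜ[ℂ] Xinv q) = 1 ⊗ₜ[ℂ] 1 ∧
    ∃ D : Abar q →ₗ[ℂ] Abar q ⊗[ℂ] Abar q,
      D 1 = 1 ⊗ₜ[ℂ] 1 ∧
      (∀ a b : Abar q, D (a * b) = gmul (D a) (D b)) ∧
      D (X q) = X q ⊗ₜ[ℂ] X q ∧
      D (Xinv q) = Xinv q ⊗ₜ[ℂ] Xinv q ∧
      D (Xi q) = X q ⊗ₜ[ℂ] Xi q + Xi q ⊗ₜ[ℂ] X q ∧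
      D (Th q) = X q ⊗ₜ[ℂ] Th q + Th q ⊗ₜ[ℂ] X q ∧
      D (Zg q) = X q ⊗ₜ[ℂ] Zg q + Zg q ⊗ₜ[ℂ] X q :=
  statement10_general q hq gmul hgmul
end

section
/- Let B be an associative ℂ-algebra with a ℂ-linear map d : B → B and elements x, ξ, θ, z of 'form-degree 0' and dx = d(x), dξ = d(ξ), dθ = d(θ), dz = d(z), such that d² = 0 on these elements, d satisfies d(ab) = (da)b + a(db) whenever a has form-degree 0 and d(αb) = (dα)b − α(db) whenever α has form-degree 1, and the sixteen commutation rules hold: x dx = dx x; x dξ = q dξ x; x dθ = q dθ x; x dz = dz x; ξ dx = q⁻¹ dx ξ; ξ dξ = −dξ ξ; ξ dθ = dθ ξ; ξ dz = −q⁻¹ dz ξ; θ dx = q⁻¹ dx θ; θ dξ = dξ θ; θ dθ = −dθ θ; θ dz = −q⁻¹ dz θ; z dx = dx z; z dξ = −q dξ z; z dθ = −q dθ z; z dz = dz z. Then the differentials satisfy: dx dξ = −q dξ dx; dx dθ = −q dθ dx; dx dz = −dz dx; dξ dθ = −dθ dξ; dξ dz = q⁻¹ dz dξ; dθ dz = q⁻¹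 dz dθ; and moreover (dx)² = 0 and (dz)² = 0. -/
/-!
Applying `d` to a commutation rule `u · dv = c · dv · u` between a coordinate and a
differential gives, by the Leibniz rule on the left, the graded Leibniz rule on the right and
`d² = 0`, the rule `du · dv = -c · dv · du` between the two differentials. For `u = v` and
`c = 1` this reads `(du)² = -(du)²`, so `(du)² = 0` over a field of characteristic zero.
-/

section GradedLeibniz

variable {R B : Type*} [CommRing R] [Ring B] [Module R B] (d : B →ₗ[R] B) {u v : B}

theorem d_mul_d_eq_neg_smul_of_mul_d_eq_smul {c : R}
    (hu : ∀ b, d (u * b) = d u * b + u * d b)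
    (hv : ∀ b, d (d v * b) = d (d v) * b - d v * d b) (hdv : d (d v) = 0)
    (h : u * d v = c • (d v * u)) : d u * d v = (-c) • (d v * d u) :=
  calc d u * d v = d (u * d v) := by rw [hu, hdv, mul_zero, add_zero]
    _ = d (c • (d v * u)) := by rw [h]
    _ = (-c) • (d v * d u) := by
      rw [map_smul, hv, hdv, zero_mul, zero_sub, smul_neg, neg_smul]

theorem d_mul_d_eq_neg_of_mul_d_eq
    (hu : ∀ b, d (u * b) = d u * b + u * d b)
    (hv : ∀ b, d (d v * b) = d (d v) * b - d v * d b) (hdv : d (d v) = 0)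
    (h : u * d v = d v * u) : d u * d v = -(d v * d u) := by
  simpa using d_mul_d_eq_neg_smul_of_mul_d_eq_smul d hu hv hdv (c := 1) (by rwa [one_smul])

theorem d_mul_self_eq_zero_of_mul_d_eq [IsAddTorsionFree B]
    (hu : ∀ b, d (u * b) = d u * b + u * d b)
    (hu' : ∀ b, d (d u * b) = d (d u) * b - d u * d b) (hdu : d (d u) = 0)
    (h : u * d u = d u * u) : d u * d u = 0 :=
  self_eq_neg.mp (d_mul_d_eq_neg_of_mul_d_eq d hu hu' hdu h)

end GradedLeibniz

theorem statement14_general (B : Type*) [Ring B] [Algebra ℂ B] (q : ℂ)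
    (d : B →ₗ[ℂ] B) (x ξ θ z : B)
    (hd2 : ∀ u ∈ ({x, ξ, θ, z} : Set B), d (d u) = 0)
    (hLeib₀ : ∀ u ∈ ({x, ξ, θ, z} : Set B), ∀ b : B, d (u * b) = d u * b + u * d b)
    (hLeib₁ : ∀ u ∈ ({x, ξ, θ, z} : Set B), ∀ b : B,
      d (d u * b) = d (d u) * b - d u * d b)
    (h₁ : x * d x = d x * x)
    (h₂ : x * d ξ = q • (d ξ * x))
    (h₃ : x * d θ = q • (d θ * x))
    (h₄ : x * d z = d z * x)
    (h₇ : ξ * d θ = d θ * ξ)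
    (h₈ : ξ * d z = (-q⁻¹) • (d z * ξ))
    (h₁₂ : θ * d z = (-q⁻¹) • (d z * θ))
    (h₁₆ : z * d z = d z * z) :
    d x * d ξ = (-q) • (d ξ * d x) ∧
    d x * d θ = (-q) • (d θ * d x) ∧
    d x * d z = -(d z * d x) ∧
    d ξ * d θ = -(d θ * d ξ) ∧
    d ξ * d z = q⁻¹ • (d z * d ξ) ∧
    d θ * d z = q⁻¹ • (d z * d θ) ∧
    d x * d x = 0 ∧
    d z * d z = 0 := by
  have := IsAddTorsionFree.of_isTorsionFree ℂ B
  simp only [Set.mem_insert_iff, Set.mem_singleton_iff, forall_eq_or_imp, forall_eq]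
    at hd2 hLeib₀ hLeib₁
  obtain ⟨Dx, Dξ, Dθ, Dz⟩ := hd2
  obtain ⟨Lx, Lξ, Lθ, Lz⟩ := hLeib₀
  obtain ⟨Lx', Lξ', Lθ', Lz'⟩ := hLeib₁
  refine ⟨d_mul_d_eq_neg_smul_of_mul_d_eq_smul d Lx Lξ' Dξ h₂,
    d_mul_d_eq_neg_smul_of_mul_d_eq_smul d Lx Lθ' Dθ h₃,
    d_mul_d_eq_neg_of_mul_d_eq d Lx Lz' Dz h₄,
    d_mul_d_eq_neg_of_mul_d_eq d Lξ Lθ' Dθ h₇, ?_, ?_,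
    d_mul_self_eq_zero_of_mul_d_eq d Lx Lx' Dx h₁,
    d_mul_self_eq_zero_of_mul_d_eq d Lz Lz' Dz h₁₆⟩
  · simpa using d_mul_d_eq_neg_smul_of_mul_d_eq_smul d Lξ Lz' Dz h₈
  · simpa using d_mul_d_eq_neg_smul_of_mul_d_eq_smul d Lθ Lz' Dz h₁₂

theorem statement14 (B : Type*) [Ring B] [Algebra ℂ B] (q : ℂ) (hq : q ≠ 0)
    (d : B →ₗ[ℂ] B) (x ξ θ z : B)
    (hd2 : ∀ u ∈ ({x, ξ, θ, z} : Set B), d (d u) = 0)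
    (hLeib₀ : ∀ u ∈ ({x, ξ, θ, z} : Set B), ∀ b : B, d (u * b) = d u * b + u * d b)
    (hLeib₁ : ∀ u ∈ ({x, ξ, θ, z} : Set B), ∀ b : B,
      d (d u * b) = d (d u) * b - d u * d b)
    (h₁ : x * d x = d x * x)
    (h₂ : x * d ξ = q • (d ξ * x))
    (h₃ : x * d θ = q • (d θ * x))
    (h₄ : x * d z = d z * x)
    (h₅ : ξ * d x = q⁻¹ • (d x * ξ))
    (h₆ : ξ * d ξ = -(d ξ * ξ))
    (h₇ : ξ * d θ = d θ * ξ)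
    (h₈ : ξ * d z = (-q⁻¹) • (d z * ξ))
    (h₉ : θ * d x = q⁻¹ • (d x * θ))
    (h₁₀ : θ * d ξ = d ξ * θ)
    (h₁₁ : θ * d θ = -(d θ * θ))
    (h₁₂ : θ * d z = (-q⁻¹) • (d z * θ))
    (h₁₃ : z * d x = d x * z)
    (h₁₄ : z * d ξ = (-q) • (d ξ * z))
    (h₁₅ : z * d θ = (-q) • (d θ * z))
    (h₁₆ : z * d z = d z * z) :
    d x * d ξ = (-q) • (d ξ * d x) ∧
    d x * d θ = (-q) • (d θ * d x) ∧
    d x * d z = -(d z * d x) ∧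
    d ξ * d θ = -(d θ * d ξ) ∧
    d ξ * d z = q⁻¹ • (d z * d ξ) ∧
    d θ * d z = q⁻¹ • (d z * d θ) ∧
    d x * d x = 0 ∧
    d z * d z = 0 :=
  statement14_general B q d x ξ θ z hd2 hLeib₀ hLeib₁ h₁ h₂ h₃ h₄ h₇ h₈ h₁₂ h₁₆
end

section
/- The monomials x^m ξ^α θ^β z^n with m, n ∈ ℕ and α, β ∈ {0,1} form a ℂ-vector-space basis of the double-graded quantum superplane algebra A_q. -/
/-!
STATEMENT 15: The monomials `x^m ξ^α θ^β z^n` with `m, n ∈ ℕ` and `α, β ∈ {0,1}` form a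
`ℂ`-vector-space basis of the double-graded quantum superplane algebra `A_q`.
-/
open scoped TensorProduct

/-!
Moving a generator leftwards past a normal-ordered monomial `x^m ξ^α θ^β z^n` with the
defining relations turns the product into a scalar multiple of another normal-ordered
monomial, or into `0` when `ξ² = 0` or `θ² = 0` intervenes. On the free vector space `V` with
basis `e_p` indexed by these monomials, the same formulas define operators that satisfy the
defining relations, hence a representation `ρ` of `A_q`, and `Φ : V → A_q, e_p ↦ monomial_p`
intertwines `ρ` with left multiplication. So `Φ (ρ(a) e₀) = a · Φ e₀ = a`, while computing from
the right gives `ρ(monomial_p) e₀ = e_p`: the maps `a ↦ ρ(a) e₀` and `Φ` are mutually inverse.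
-/

theorem mul_pow_eq_smul_pow_mul {R A : Type*} [CommSemiring R] [Semiring A] [Algebra R A]
    {a b : A} {c : R} (h : a * b = c • (b * a)) (m : ℕ) : a * b ^ m = c ^ m • (b ^ m * a) := by
  induction m with
  | zero => simp
  | succ m ih =>
    rw [pow_succ, ← mul_assoc, ih, smul_mul_assoc, mul_assoc, h, mul_smul_comm, smul_smul,
      ← pow_succ, ← mul_assoc]

namespace DGQS

variable {q : ℂ}

theorem Xi_mul_X (hq : q ≠ 0) : Xi q * X q = q⁻¹ • (X q * Xi q) := by
  have h : X q * Xi q = q • (Xi q * X q) := by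
    simpa [X, Xi, gen] using RingQuot.mkAlgHom_rel ℂ (Rel.x_xi (q := q))
  rw [h, smul_smul, inv_mul_cancel₀ hq, one_smul]

theorem Th_mul_X (hq : q ≠ 0) : Th q * X q = q⁻¹ • (X q * Th q) := by
  have h : X q * Th q = q • (Th q * X q) := by
    simpa [X, Th, gen] using RingQuot.mkAlgHom_rel ℂ (Rel.x_th (q := q))
  rw [h, smul_smul, inv_mul_cancel₀ hq, one_smul]

theorem commute_Zg_X : Commute (Zg q) (X q) :=
  (by simpa [X, Zg, gen] using RingQuot.mkAlgHom_rel ℂ (Rel.x_z (q := q)) :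
    X q * Zg q = Zg q * X q).symm

theorem Xi_mul_Xi : Xi q * Xi q = 0 := by
  simpa [Xi, gen] using RingQuot.mkAlgHom_rel ℂ (Rel.xi_sq (q := q))

theorem Th_mul_Th : Th q * Th q = 0 := by
  simpa [Th, gen] using RingQuot.mkAlgHom_rel ℂ (Rel.th_sq (q := q))

theorem commute_Th_Xi : Commute (Th q) (Xi q) :=
  (by simpa [Xi, Th, gen] using RingQuot.mkAlgHom_rel ℂ (Rel.xi_th (q := q)) :
    Xi q * Th q = Th q * Xi q).symm

theorem Zg_mul_Xi (hq : q ≠ 0) : Zg q * Xi q = (-q) • (Xi q * Zg q) := by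
  have h : Xi q * Zg q = (-q⁻¹) • (Zg q * Xi q) := by
    simpa only [Xi, Zg, gen, map_mul, map_smul] using RingQuot.mkAlgHom_rel ℂ (Rel.xi_z (q := q))
  rw [h, smul_smul, neg_mul_neg, mul_inv_cancel₀ hq, one_smul]

theorem Zg_mul_Th (hq : q ≠ 0) : Zg q * Th q = (-q) • (Th q * Zg q) := by
  have h : Th q * Zg q = (-q⁻¹) • (Zg q * Th q) := by
    simpa only [Th, Zg, gen, map_mul, map_smul] using RingQuot.mkAlgHom_rel ℂ (Rel.th_z (q := q))
  rw [h, smul_smul, neg_mul_neg, mul_inv_cancel₀ hq, one_smul]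

abbrev PBWIndex : Type := ℕ × Bool × Bool × ℕ

variable (q) in
noncomputable def pbwMonomial (p : PBWIndex) : Aq q :=
  X q ^ p.1 * Xi q ^ p.2.1.toNat * Th q ^ p.2.2.1.toNat * Zg q ^ p.2.2.2

theorem X_mul_pbwMonomial (m : ℕ) (a b : Bool) (n : ℕ) :
    X q * pbwMonomial q (m, a, b, n) = pbwMonomial q (m + 1, a, b, n) := by
  simp only [pbwMonomial, pow_succ', mul_assoc]

theorem Xi_mul_pbwMonomial_false (hq : q ≠ 0) (m : ℕ) (b : Bool) (n : ℕ) :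
    Xi q * pbwMonomial q (m, false, b, n) = q⁻¹ ^ m • pbwMonomial q (m, true, b, n) := by
  simp only [pbwMonomial, Bool.toNat_false, Bool.toNat_true, pow_zero, pow_one, mul_one,
    ← mul_assoc, mul_pow_eq_smul_pow_mul (Xi_mul_X hq), smul_mul_assoc]

theorem Xi_mul_pbwMonomial_true (hq : q ≠ 0) (m : ℕ) (b : Bool) (n : ℕ) :
    Xi q * pbwMonomial q (m, true, b, n) = 0 := by
  simp only [pbwMonomial, Bool.toNat_true, pow_one, ← mul_assoc,
    mul_pow_eq_smul_pow_mul (Xi_mul_X hq), smul_mul_assoc]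
  simp only [mul_assoc, Xi_mul_Xi, zero_mul, mul_zero, smul_zero]

theorem Th_mul_pbwMonomial_false (hq : q ≠ 0) (m : ℕ) (a : Bool) (n : ℕ) :
    Th q * pbwMonomial q (m, a, false, n) = q⁻¹ ^ m • pbwMonomial q (m, a, true, n) := by
  simp only [pbwMonomial, Bool.toNat_false, Bool.toNat_true, pow_zero, pow_one, mul_one,
    ← mul_assoc, mul_pow_eq_smul_pow_mul (Th_mul_X hq), smul_mul_assoc]
  rw [mul_assoc (X q ^ m), (commute_Th_Xi.pow_right _).eq, ← mul_assoc]

theorem Th_mul_pbwMonomial_true (hq : q ≠ 0) (m : ℕ) (a : Bool) (n : ℕ) :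
    Th q * pbwMonomial q (m, a, true, n) = 0 := by
  simp only [pbwMonomial, Bool.toNat_true, pow_one, ← mul_assoc,
    mul_pow_eq_smul_pow_mul (Th_mul_X hq), smul_mul_assoc]
  rw [mul_assoc (X q ^ m) (Th q), (commute_Th_Xi.pow_right _).eq]
  simp only [mul_assoc, Th_mul_Th, zero_mul, mul_zero, smul_zero]

theorem Zg_mul_pbwMonomial (hq : q ≠ 0) (m : ℕ) (a b : Bool) (n : ℕ) :
    Zg q * pbwMonomial q (m, a, b, n)
      = (-q) ^ (a.toNat + b.toNat) • pbwMonomial q (m, a, b, n + 1) := by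
  simp only [pbwMonomial, ← mul_assoc, (commute_Zg_X.pow_right _).eq]
  rw [mul_assoc (X q ^ m) (Zg q), mul_pow_eq_smul_pow_mul (Zg_mul_Xi hq)]
  simp only [mul_smul_comm, smul_mul_assoc, ← mul_assoc]
  rw [mul_assoc (X q ^ m * Xi q ^ a.toNat) (Zg q), mul_pow_eq_smul_pow_mul (Zg_mul_Th hq)]
  simp only [mul_smul_comm, smul_mul_assoc, ← mul_assoc, smul_smul]
  rw [mul_assoc _ (Zg q), ← pow_succ', ← pow_add]

variable (q) in
noncomputable def genAction : Fin 4 → PBWIndex → PBWIndex →₀ ℂ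
  | 0, (m, a, b, n) => Finsupp.single (m + 1, a, b, n) 1
  | 1, (m, false, b, n) => Finsupp.single (m, true, b, n) (q⁻¹ ^ m)
  | 1, (_, true, _, _) => 0
  | 2, (m, a, false, n) => Finsupp.single (m, a, true, n) (q⁻¹ ^ m)
  | 2, (_, _, true, _) => 0
  | 3, (m, a, b, n) => Finsupp.single (m, a, b, n + 1) ((-q) ^ (a.toNat + b.toNat))

theorem gen_mul_pbwMonomial (hq : q ≠ 0) :
    ∀ (i : Fin 4) (p : PBWIndex),
      gen q i * pbwMonomial q p = Finsupp.linearCombination ℂ (pbwMonomial q) (genAction q i p)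
  | 0, (m, a, b, n) => (X_mul_pbwMonomial m a b n).trans (by simp [genAction])
  | 1, (m, false, b, n) => (Xi_mul_pbwMonomial_false hq m b n).trans (by simp [genAction])
  | 1, (m, true, b, n) => (Xi_mul_pbwMonomial_true hq m b n).trans (by simp [genAction])
  | 2, (m, a, false, n) => (Th_mul_pbwMonomial_false hq m a n).trans (by simp [genAction])
  | 2, (m, a, true, n) => (Th_mul_pbwMonomial_true hq m a n).trans (by simp [genAction])
  | 3, (m, a, b, n) => (Zg_mul_pbwMonomial hq m a b n).trans (by simp [genAction])

noncomputable def pbwRep (hq : q ≠ 0) : Aq q →ₐ[ℂ] Module.End ℂ (PBWIndex →₀ ℂ) :=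
  RingQuot.liftAlgHom ℂ ⟨FreeAlgebra.lift ℂ fun i => Finsupp.linearCombination ℂ (genAction q i),
    fun x y h => by
      induction h <;>
      · simp only [map_mul, map_smul, map_zero, FreeAlgebra.lift_ι_apply]
        refine Finsupp.lhom_ext' fun p => LinearMap.ext_ring ?_
        obtain ⟨m, a, b, n⟩ := p
        cases a <;> cases b <;>
          simp only [Module.End.mul_apply, LinearMap.smul_apply, LinearMap.zero_apply,
            LinearMap.coe_comp, Function.comp_apply, Finsupp.lsingle_apply,
            Finsupp.linearCombination_single, genAction, map_zero, smul_zero,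
            Finsupp.smul_single, smul_eq_mul, one_smul, mul_one, Bool.toNat_false, Bool.toNat_true]
        all_goals congr 1; grind⟩

theorem pbwRep_gen (hq : q ≠ 0) (i : Fin 4) :
    pbwRep hq (gen q i) = Finsupp.linearCombination ℂ (genAction q i) := by
  rw [gen, pbwRep, RingQuot.liftAlgHom_mkAlgHom_apply, FreeAlgebra.lift_ι_apply]

theorem linearCombination_pbwRep (hq : q ≠ 0) (a : Aq q) (v : PBWIndex →₀ ℂ) :
    Finsupp.linearCombination ℂ (pbwMonomial q) (pbwRep hq a v)
      = a * Finsupp.linearCombination ℂ (pbwMonomial q) v := by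
  obtain ⟨f, rfl⟩ := RingQuot.mkAlgHom_surjective ℂ (Rel q) a
  induction f using FreeAlgebra.induction generalizing v with
  | grade0 r =>
    rw [AlgHom.commutes, AlgHom.commutes, Module.algebraMap_end_apply, map_smul, Algebra.smul_def]
  | grade1 i =>
    rw [← gen, pbwRep_gen]
    induction v using Finsupp.induction_linear with
    | zero => simp only [map_zero, mul_zero]
    | add v w hv hw => rw [map_add, map_add, hv, hw, map_add, mul_add]
    | single p c =>
      rw [Finsupp.linearCombination_single, map_smul, ← gen_mul_pbwMonomial hq,
        Finsupp.linearCombination_single, mul_smul_comm]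
  | mul f g hf hg => rw [map_mul, map_mul, Module.End.mul_apply, hf, hg, mul_assoc]
  | add f g hf hg => rw [map_add, map_add, LinearMap.add_apply, map_add, hf, hg, add_mul]

theorem pbwRep_X_pow (hq : q ≠ 0) (j m : ℕ) (a b : Bool) (n : ℕ) :
    (pbwRep hq (X q) ^ j) (Finsupp.single (m, a, b, n) 1) = Finsupp.single (m + j, a, b, n) 1 := by
  induction j with
  | zero => rfl
  | succ j ih =>
    rw [pow_succ', Module.End.mul_apply, ih, X, pbwRep_gen, Finsupp.linearCombination_single,
      one_smul, genAction, add_assoc]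

theorem pbwRep_Zg_pow (hq : q ≠ 0) (j n : ℕ) :
    (pbwRep hq (Zg q) ^ j) (Finsupp.single (0, false, false, n) 1)
      = Finsupp.single (0, false, false, n + j) 1 := by
  induction j with
  | zero => rfl
  | succ j ih =>
    rw [pow_succ', Module.End.mul_apply, ih, Zg, pbwRep_gen, Finsupp.linearCombination_single,
      one_smul, genAction]
    simp [add_assoc]

variable (q) in
noncomputable def pbwCoords (hq : q ≠ 0) : Aq q →ₗ[ℂ] PBWIndex →₀ ℂ :=
  LinearMap.applyₗ (Finsupp.single (0, false, false, 0) 1) ∘ₗ (pbwRep hq).toLinearMap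

theorem pbwCoords_pbwMonomial (hq : q ≠ 0) (p : PBWIndex) :
    pbwCoords q hq (pbwMonomial q p) = Finsupp.single p 1 := by
  obtain ⟨m, a, b, n⟩ := p
  simp only [pbwCoords, LinearMap.coe_comp, Function.comp_apply, AlgHom.toLinearMap_apply,
    LinearMap.applyₗ_apply_apply, pbwMonomial, map_mul, map_pow, Module.End.mul_apply,
    pbwRep_Zg_pow, zero_add]
  cases a <;> cases b <;> simp [Xi, Th, pbwRep_gen, genAction, pbwRep_X_pow]

theorem linearCombination_pbwCoords (hq : q ≠ 0) (a : Aq q) :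
    Finsupp.linearCombination ℂ (pbwMonomial q) (pbwCoords q hq a) = a := by
  rw [pbwCoords, LinearMap.comp_apply, AlgHom.toLinearMap_apply, LinearMap.applyₗ_apply_apply,
    linearCombination_pbwRep, Finsupp.linearCombination_single, one_smul]
  simp [pbwMonomial]

variable (q) in
noncomputable def pbwBasis (hq : q ≠ 0) : Module.Basis PBWIndex ℂ (Aq q) :=
  .ofRepr <| .ofLinearMap (pbwCoords q hq) (Finsupp.linearCombination ℂ (pbwMonomial q))
    (Finsupp.lhom_ext' fun p => LinearMap.ext_ring (by simp [pbwCoords_pbwMonomial]))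
    (LinearMap.ext (linearCombination_pbwCoords hq))

theorem coe_pbwBasis (hq : q ≠ 0) : ⇑(pbwBasis q hq) = pbwMonomial q := by
  ext p
  simp [pbwBasis]

end DGQS

open DGQS in
theorem statement15_general (q : ℂ) (hq : q ≠ 0) :
    LinearIndependent ℂ
      (fun p : ℕ × Bool × Bool × ℕ =>
        X q ^ p.1 * Xi q ^ p.2.1.toNat * Th q ^ p.2.2.1.toNat * Zg q ^ p.2.2.2) ∧
    Submodule.span ℂ
      (Set.range (fun p : ℕ × Bool × Bool × ℕ =>
        X q ^ p.1 * Xi q ^ p.2.1.toNat * Th q ^ p.2.2.1.toNat * Zg q ^ p.2.2.2)) = ⊤ := by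
  change LinearIndependent ℂ (pbwMonomial q) ∧ Submodule.span ℂ (Set.range (pbwMonomial q)) = ⊤
  rw [← coe_pbwBasis hq]
  exact ⟨(pbwBasis q hq).linearIndependent, (pbwBasis q hq).span_eq⟩

open DGQS in
/-- The PBW monomials `x^m ξ^α θ^β z^n` are linearly independent and span `A_q`,
i.e. they form a `ℂ`-vector-space basis of `A_q`. -/
theorem statement15 (q : ℂ) (hq : q ≠ 0) (hqroot : ∀ n : ℕ, 0 < n → q ^ n ≠ 1) :
    LinearIndependent ℂ
      (fun p : ℕ × Bool × Bool × ℕ =>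
        X q ^ p.1 * Xi q ^ p.2.1.toNat * Th q ^ p.2.2.1.toNat * Zg q ^ p.2.2.2) ∧
    Submodule.span ℂ
      (Set.range (fun p : ℕ × Bool × Bool × ℕ =>
        X q ^ p.1 * Xi q ^ p.2.1.toNat * Th q ^ p.2.2.1.toNat * Zg q ^ p.2.2.2)) = ⊤ :=
  statement15_general q hq
end
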